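/- Convergence of shallow linear distillation: if the student is a directly parameterized linear classifier trained by gradient flow on L¹ from w(0) = 0, with X full-rank, then w(t) → ŵ as t → ∞, where ŵ = w* if n ≥ d and ŵ = X(XᵀX)⁻¹Xᵀw* if n < d. -/

import Mathlib

/-!
Statement 0: The gradient of the normalized cross-entropy distillation loss
L¹(w) = (1/n) Σᵢ ℓᵢ(wᵀxᵢ) equals (1/n) Σᵢ (σ(wᵀxᵢ) − yᵢ)·xᵢ, where yᵢ = σ(w*ᵀxᵢ),
and hence ∇L¹(w) always lies in the span of the data vectors x₁,…,xₙ.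
-/

open Real Matrix Finset
open scoped RealInnerProductSpace BigOperators

noncomputable section

abbrev E (d : ℕ) := EuclideanSpace ℝ (Fin d)

/-- The _root_.sigmoid function σ(u) = 1/(1+e^{−u}). -/
def _root_.sigmoid (u : ℝ) : ℝ := 1 / (1 + Real.exp (-u))

/-- Per-instance normalized cross-entropy loss ℓ(u) for soft label y,
ℓ(u) = −y log σ(u) − (1−y) log(1−σ(u)) − ℓ*, with ℓ* = −y log y − (1−y) log(1−y). -/
def perLoss (y u : ℝ) : ℝ :=
  (-(y * Real.log (_root_.sigmoid u)) - (1 - y) * Real.log (1 - _root_.sigmoid u))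
    - (-(y * Real.log y) - (1 - y) * Real.log (1 - y))

/-- The normalized cross-entropy distillation loss L¹(w) = (1/n) Σᵢ ℓᵢ(⟪w,xᵢ⟫)
with soft labels yᵢ = σ(⟪w*,xᵢ⟫). -/
def distillLoss {d n : ℕ} (x : Fin n → E d) (wstar : E d) (w : E d) : ℝ :=
  (n : ℝ)⁻¹ * ∑ i, perLoss (_root_.sigmoid ⟪wstar, x i⟫) ⟪w, x i⟫

/-- The data matrix X = [x₁,…,xₙ] ∈ ℝ^{d×n} whose columns are the data points. -/
def Xmat {d n : ℕ} (x : Fin n → E d) : Matrix (Fin d) (Fin n) ℝ :=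
  Matrix.of fun k i => x i k

/-- Reinterpret a plain vector as a point of Euclidean space. -/
def toE {m : ℕ} (v : Fin m → ℝ) : EuclideanSpace ℝ (Fin m) := WithLp.toLp 2 v

/-!
Statement 9 (Convergence of shallow linear distillation): if the student is a directly
parameterized linear classifier trained by gradient flow on L¹ from w(0) = 0, with X
full-rank, then w(t) → ŵ as t → ∞, where ŵ = w* if n ≥ d and ŵ = X(XᵀX)⁻¹Xᵀw* if n < d.
-/

lemma one_add_exp_pos (u : ℝ) : 0 < 1 + Real.exp u := by positivity

lemma sigmoid_pos (u : ℝ) : 0 < _root_.sigmoid u := by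
  unfold _root_.sigmoid; positivity

lemma sigmoid_lt_one (u : ℝ) : _root_.sigmoid u < 1 := by
  unfold _root_.sigmoid
  rw [div_lt_one (one_add_exp_pos _)]
  linarith [Real.exp_pos (-u)]

lemma one_sub_sigmoid (u : ℝ) : 1 - _root_.sigmoid u = Real.exp (-u) / (1 + Real.exp (-u)) := by
  unfold _root_.sigmoid
  field_simp
  ring

lemma hasDerivAt_sigmoid (u : ℝ) :
    HasDerivAt _root_.sigmoid (_root_.sigmoid u * (1 - _root_.sigmoid u)) u := by
  have h1 : HasDerivAt (fun v : ℝ => 1 + Real.exp (-v)) (-Real.exp (-u)) u := by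
    simpa using ((Real.hasDerivAt_exp (-u)).comp u ((hasDerivAt_id u).neg)).const_add 1
  have h2 : (1 + Real.exp (-u)) ≠ 0 := (one_add_exp_pos _).ne'
  have h3 := h1.fun_inv h2
  have hfun : _root_.sigmoid = fun v => (1 + Real.exp (-v))⁻¹ := by
    funext v; simp [_root_.sigmoid, one_div]
  have : HasDerivAt _root_.sigmoid (-(-Real.exp (-u)) / (1 + Real.exp (-u)) ^ 2) u := by
    rw [hfun]; simpa using h3
  convert this using 1
  rw [one_sub_sigmoid]
  unfold _root_.sigmoid
  field_simp

lemma hasDerivAt_perLoss (y u : ℝ) :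
    HasDerivAt (perLoss y) (_root_.sigmoid u - y) u := by
  have hs := _root_.hasDerivAt_sigmoid u
  have hpos := _root_.sigmoid_pos u
  have hlt := _root_.sigmoid_lt_one u
  have hlog1 : HasDerivAt (fun v => Real.log (_root_.sigmoid v))
      (_root_.sigmoid u * (1 - _root_.sigmoid u) / _root_.sigmoid u) u := hs.log hpos.ne'
  have hlog2 : HasDerivAt (fun v => Real.log (1 - _root_.sigmoid v))
      (-(_root_.sigmoid u * (1 - _root_.sigmoid u)) / (1 - _root_.sigmoid u)) u :=
    (hs.const_sub 1).log (by linarith)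
  have h : HasDerivAt (perLoss y)
      (-(y * (_root_.sigmoid u * (1 - _root_.sigmoid u) / _root_.sigmoid u))
        - (1 - y) * (-(_root_.sigmoid u * (1 - _root_.sigmoid u)) / (1 - _root_.sigmoid u))) u := by
    unfold perLoss
    exact (((hlog1.const_mul y).neg.sub (hlog2.const_mul (1 - y)))).sub_const _
  have e1 : _root_.sigmoid u * (1 - _root_.sigmoid u) / _root_.sigmoid u = 1 - _root_.sigmoid u := by
    field_simp
  have e2 : -(_root_.sigmoid u * (1 - _root_.sigmoid u)) / (1 - _root_.sigmoid u) = -_root_.sigmoid u := by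
    rw [neg_div]
    rw [mul_div_assoc, div_self (by linarith : (1:ℝ) - _root_.sigmoid u ≠ 0), mul_one]
  rw [e1, e2] at h
  convert h using 1
  ring

lemma hasGradientAt_distillLoss {d n : ℕ} (x : Fin n → E d) (wstar : E d) (v : E d) :
    HasGradientAt (distillLoss x wstar)
      ((n : ℝ)⁻¹ • ∑ i, (_root_.sigmoid ⟪v, x i⟫ - _root_.sigmoid ⟪wstar, x i⟫) • x i) v := by
  rw [hasGradientAt_iff_hasFDerivAt]
  have hi : ∀ i : Fin n, HasFDerivAt (fun w : E d => perLoss (_root_.sigmoid ⟪wstar, x i⟫) ⟪w, x i⟫)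
      ((_root_.sigmoid ⟪v, x i⟫ - _root_.sigmoid ⟪wstar, x i⟫) • (innerSL ℝ (x i))) v := by
    intro i
    have hfun : (fun w : E d => ⟪w, x i⟫) = fun w : E d => (innerSL ℝ (x i)) w := by
      funext w
      simp only [innerSL_apply_apply]
      exact (real_inner_comm w (x i)).symm
    have h1 : HasFDerivAt (fun w : E d => ⟪w, x i⟫) (innerSL ℝ (x i)) v := by
      rw [hfun]
      exact (innerSL ℝ (x i)).hasFDerivAt
    exact (hasDerivAt_perLoss (_root_.sigmoid ⟪wstar, x i⟫) ⟪v, x i⟫).comp_hasFDerivAt v h1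
  have hsum : HasFDerivAt (fun w : E d => ∑ i, perLoss (_root_.sigmoid ⟪wstar, x i⟫) ⟪w, x i⟫)
      (∑ i, (_root_.sigmoid ⟪v, x i⟫ - _root_.sigmoid ⟪wstar, x i⟫) • (innerSL ℝ (x i))) v :=
    HasFDerivAt.fun_sum fun i _ => hi i
  have hfull : HasFDerivAt (distillLoss x wstar)
      ((n : ℝ)⁻¹ • ∑ i, (_root_.sigmoid ⟪v, x i⟫ - _root_.sigmoid ⟪wstar, x i⟫) • (innerSL ℝ (x i))) v := by
    unfold distillLoss
    exact hsum.const_mul _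
  have key : (InnerProductSpace.toDual ℝ (E d))
        ((n : ℝ)⁻¹ • ∑ i, (_root_.sigmoid ⟪v, x i⟫ - _root_.sigmoid ⟪wstar, x i⟫) • x i)
      = (n : ℝ)⁻¹ • ∑ i, (_root_.sigmoid ⟪v, x i⟫ - _root_.sigmoid ⟪wstar, x i⟫) • (innerSL ℝ (x i)) := by
    apply ContinuousLinearMap.ext
    intro z
    simp [InnerProductSpace.toDual_apply_apply, real_inner_smul_left, sum_inner,
      ContinuousLinearMap.sum_apply, inner_smul_left]
  rw [key]
  exact hfull

lemma gradient_distillLoss {d n : ℕ} (x : Fin n → E d) (wstar : E d) (v : E d) :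
    gradient (distillLoss x wstar) v
      = (n : ℝ)⁻¹ • ∑ i, (_root_.sigmoid ⟪v, x i⟫ - _root_.sigmoid ⟪wstar, x i⟫) • x i :=
  (hasGradientAt_distillLoss x wstar v).gradient


lemma sigmoid_monotone : Monotone _root_.sigmoid := by
  intro a b hab
  unfold _root_.sigmoid
  have h1 : Real.exp (-b) ≤ Real.exp (-a) := Real.exp_le_exp.2 (by linarith)
  have h2 : 0 < 1 + Real.exp (-b) := one_add_exp_pos _
  exact one_div_le_one_div_of_le h2 (by linarith)

lemma sigmoid_strong_aux {M a b : ℝ} (ha : |a| ≤ M) (hb : |b| ≤ M) (hab : b ≤ a) :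
    (a - b) * (Real.exp (-M) / (1 + Real.exp M) ^ 2) ≤ _root_.sigmoid a - _root_.sigmoid b := by
  have hA0 : (0:ℝ) < Real.exp (-a) := Real.exp_pos _
  have hB0 : (0:ℝ) < Real.exp (-b) := Real.exp_pos _
  obtain ⟨ha1, ha2⟩ := abs_le.1 ha
  obtain ⟨hb1, hb2⟩ := abs_le.1 hb
  have hdiff : _root_.sigmoid a - _root_.sigmoid b
      = (Real.exp (-b) - Real.exp (-a)) / ((1 + Real.exp (-a)) * (1 + Real.exp (-b))) := by
    unfold _root_.sigmoid
    field_simp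
    ring
  have hBA : Real.exp (-a) * (a - b) ≤ Real.exp (-b) - Real.exp (-a) := by
    have hexp : Real.exp (-b) = Real.exp (-a) * Real.exp (a - b) := by
      rw [← Real.exp_add]; ring_nf
    have h1 : (a - b) + 1 ≤ Real.exp (a - b) := Real.add_one_le_exp _
    rw [hexp]
    nlinarith
  have hAM : Real.exp (-M) ≤ Real.exp (-a) := Real.exp_le_exp.2 (by linarith)
  have haM : Real.exp (-a) ≤ Real.exp M := Real.exp_le_exp.2 (by linarith)
  have hbM : Real.exp (-b) ≤ Real.exp M := Real.exp_le_exp.2 (by linarith)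
  rw [hdiff, mul_div_assoc']
  have hd0 : (0:ℝ) < (1 + Real.exp (-a)) * (1 + Real.exp (-b)) := by positivity
  apply div_le_div₀
  · nlinarith
  · nlinarith
  · exact hd0
  · nlinarith [Real.exp_pos M]

lemma sigmoid_strong {M a b : ℝ} (ha : |a| ≤ M) (hb : |b| ≤ M) :
    (Real.exp (-M) / (1 + Real.exp M) ^ 2) * (a - b) ^ 2
      ≤ (_root_.sigmoid a - _root_.sigmoid b) * (a - b) := by
  rcases le_total b a with h | h
  · have := sigmoid_strong_aux ha hb h
    nlinarith
  · have := sigmoid_strong_aux hb ha h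
    nlinarith


section Master
variable {d n : ℕ}

lemma G_mem_span (x : Fin n → E d) (wstar v : E d) :
    ((n : ℝ)⁻¹ • ∑ i, (_root_.sigmoid ⟪v, x i⟫ - _root_.sigmoid ⟪wstar, x i⟫) • x i)
      ∈ Submodule.span ℝ (Set.range x) := by
  apply Submodule.smul_mem
  apply Submodule.sum_mem
  intro i _
  exact Submodule.smul_mem _ _ (Submodule.subset_span ⟨i, rfl⟩)

lemma exists_antilip (x : Fin n → E d) :
    ∃ c0 : ℝ, 0 < c0 ∧ ∀ v : E d, v ∈ Submodule.span ℝ (Set.range x) →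
      ‖v‖ ^ 2 ≤ c0 * ∑ i, ⟪x i, v⟫ ^ 2 := by
  classical
  set S := Submodule.span ℝ (Set.range x) with hS
  let T0 : E d →ₗ[ℝ] EuclideanSpace ℝ (Fin n) :=
    ((WithLp.linearEquiv 2 ℝ (Fin n → ℝ)).symm.toLinearMap).comp
      (LinearMap.pi (fun i => ((innerSL ℝ (x i)).toLinearMap)))
  have hT0 : ∀ (v : E d) (i : Fin n), T0 v i = ⟪x i, v⟫ := fun v i => rfl
  let T : S →ₗ[ℝ] EuclideanSpace ℝ (Fin n) := T0.comp S.subtype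
  have hTapp : ∀ (v : S) (i : Fin n), T v i = ⟪x i, (v : E d)⟫ := fun v i => rfl
  have hTinj : Function.Injective T := by
    rw [← LinearMap.ker_eq_bot, Submodule.eq_bot_iff]
    intro v hv
    have hv0 : T v = 0 := LinearMap.mem_ker.1 hv
    have hvz : ∀ i : Fin n, ⟪x i, (v : E d)⟫ = 0 := by
      intro i
      rw [← hTapp v i, hv0]
      rfl
    have hvo : (v : E d) ∈ Sᗮ := by
      rw [Submodule.mem_orthogonal]
      intro z hz
      induction hz using Submodule.span_induction with
      | mem z hzr =>
        obtain ⟨i, rfl⟩ := hzr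
        exact hvz i
      | zero => exact inner_zero_left _
      | add _ _ _ _ h1 h2 => rw [inner_add_left, h1, h2, add_zero]
      | smul r _ _ h1 => rw [inner_smul_left, h1]; simp
    have hz : ((v : E d) : E d) = 0 := by
      have h1 := (Submodule.mem_orthogonal S (v : E d)).1 hvo (v : E d) v.2
      exact inner_self_eq_zero.1 h1
    exact Subtype.ext hz
  let eT : S ≃ₗ[ℝ] LinearMap.range T := LinearEquiv.ofInjective T hTinj
  let eC : S ≃L[ℝ] LinearMap.range T := eT.toContinuousLinearEquiv
  set c1 : ℝ := (‖(eC.symm : LinearMap.range T →L[ℝ] S)‖₊ : ℝ) + 1 with hc1def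
  have hc10 : 0 < c1 := by positivity
  have hTbound : ∀ v : S, ‖v‖ ≤ c1 * ‖T v‖ := by
    intro v
    have h1 := eC.antilipschitz.le_mul_dist v 0
    rw [dist_zero_right, map_zero, dist_zero_right] at h1
    have h2 : ‖eC v‖ = ‖T v‖ := by
      have h3 : ((eC v : LinearMap.range T) : EuclideanSpace ℝ (Fin n)) = T v := by
        show ((eT v : LinearMap.range T) : EuclideanSpace ℝ (Fin n)) = T v
        rfl
      rw [← h3]
      rfl
    rw [h2] at h1
    have h3 : (0:ℝ) ≤ ‖T v‖ := norm_nonneg _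
    calc ‖v‖ ≤ (‖(eC.symm : LinearMap.range T →L[ℝ] S)‖₊ : ℝ) * ‖T v‖ := h1
    _ ≤ c1 * ‖T v‖ := by
        apply mul_le_mul_of_nonneg_right _ h3
        rw [hc1def]; linarith
  refine ⟨c1 ^ 2, by positivity, ?_⟩
  intro v hv
  have hnv : ‖(⟨v, hv⟩ : S)‖ = ‖v‖ := rfl
  have h1 := hTbound ⟨v, hv⟩
  rw [hnv] at h1
  have hTn : ‖T ⟨v, hv⟩‖ ^ 2 = ∑ i, ⟪x i, v⟫ ^ 2 := by
    rw [EuclideanSpace.norm_eq]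
    rw [Real.sq_sqrt (Finset.sum_nonneg fun i _ => sq_nonneg _)]
    apply Finset.sum_congr rfl
    intro i _
    rw [hTapp]
    rw [Real.norm_eq_abs, sq_abs]
  have h2 : ‖v‖ ^ 2 ≤ (c1 * ‖T ⟨v, hv⟩‖) ^ 2 := by
    have := norm_nonneg v
    nlinarith
  rw [mul_pow, hTn] at h2
  exact h2

set_option maxHeartbeats 1000000 in
lemma converge_master (hn : 0 < n) (x : Fin n → E d) (wstar : E d)
    (w : ℝ → E d)
    (hflow : ∀ τ : ℝ, HasDerivAt w (-(gradient (distillLoss x wstar) (w τ))) τ)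
    (h0 : w 0 = 0) (what : E d)
    (hinner : ∀ i, ⟪what, x i⟫ = ⟪wstar, x i⟫)
    (hmem : what ∈ Submodule.span ℝ (Set.range x)) :
    Filter.Tendsto w Filter.atTop (nhds what) := by
  classical
  set S := Submodule.span ℝ (Set.range x) with hS
  set G : E d → E d :=
    fun v => (n : ℝ)⁻¹ • ∑ i, (_root_.sigmoid ⟪v, x i⟫ - _root_.sigmoid ⟪wstar, x i⟫) • x i with hG
  have hflow' : ∀ τ, HasDerivAt w (-(G (w τ))) τ := by
    intro τ
    have := hflow τ
    rwa [gradient_distillLoss] at this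
  have hGS : ∀ v, G v ∈ S := fun v => G_mem_span x wstar v
  -- the trajectory stays in the span S
  have hwS : ∀ τ, w τ ∈ S := by
    intro τ
    rw [← Submodule.orthogonal_orthogonal S]
    rw [Submodule.mem_orthogonal]
    intro z hz
    have hf : ∀ t : ℝ, HasDerivAt (fun t => ⟪z, w t⟫) 0 t := by
      intro t
      have hd := (hasDerivAt_const t z).inner ℝ (hflow' t)
      have hzero : (⟪z, -(G (w t))⟫ + ⟪(0 : E d), w t⟫ : ℝ) = 0 := by
        rw [inner_neg_right, inner_zero_left]
        have := Submodule.mem_orthogonal' S z |>.1 hz (G (w t)) (hGS (w t))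
        rw [this]
        ring
      rwa [hzero] at hd
    have hconst : ⟪z, w τ⟫ = ⟪z, w 0⟫ := by
      have hdiff : Differentiable ℝ (fun t => ⟪z, w t⟫) :=
        fun t => (hf t).differentiableAt
      exact is_const_of_deriv_eq_zero hdiff (fun t => (hf t).deriv) τ 0
    rw [hconst, h0, inner_zero_right]
  -- Lyapunov function V
  set u : ℝ → E d := fun τ => w τ - what with hu
  have hud : ∀ τ, HasDerivAt u (-(G (w τ))) τ := fun τ => (hflow' τ).sub_const what
  set V : ℝ → ℝ := fun τ => ⟪u τ, u τ⟫ with hV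
  have hVpos : ∀ τ, 0 ≤ V τ := fun τ => real_inner_self_nonneg
  have hVd : ∀ τ, HasDerivAt V (-2 * ⟪G (w τ), u τ⟫) τ := by
    intro τ
    have h := (hud τ).inner ℝ (hud τ)
    have he : (⟪u τ, -(G (w τ))⟫ + ⟪-(G (w τ)), u τ⟫ : ℝ) = -2 * ⟪G (w τ), u τ⟫ := by
      rw [inner_neg_right, inner_neg_left, real_inner_comm (u τ) (G (w τ))]
      ring
    rwa [he] at h
  -- key identity for the inner product with the gradient
  have hkey : ∀ v : E d, ⟪G v, v - what⟫
      = (n:ℝ)⁻¹ * ∑ i, (_root_.sigmoid ⟪v, x i⟫ - _root_.sigmoid ⟪wstar, x i⟫)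
          * (⟪v, x i⟫ - ⟪wstar, x i⟫) := by
    intro v
    show ⟪(n : ℝ)⁻¹ • ∑ i, (_root_.sigmoid ⟪v, x i⟫ - _root_.sigmoid ⟪wstar, x i⟫) • x i, v - what⟫ = _
    rw [real_inner_smul_left, sum_inner]
    congr 1
    apply Finset.sum_congr rfl
    intro i _
    rw [real_inner_smul_left]
    congr 1
    rw [inner_sub_right, ← hinner i, real_inner_comm v (x i), real_inner_comm what (x i)]
  have hterm0 : ∀ a b : ℝ, 0 ≤ (_root_.sigmoid a - _root_.sigmoid b) * (a - b) := by
    intro a b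
    rcases le_total b a with h|h
    · exact mul_nonneg (sub_nonneg.2 (_root_.sigmoid_monotone h)) (sub_nonneg.2 h)
    · nlinarith [_root_.sigmoid_monotone h]
  have hkey0 : ∀ v : E d, 0 ≤ ⟪G v, v - what⟫ := by
    intro v
    rw [hkey v]
    exact mul_nonneg (inv_nonneg.2 (Nat.cast_nonneg n))
      (Finset.sum_nonneg fun i _ => hterm0 _ _)
  have hVanti : Antitone V :=
    antitone_of_deriv_nonpos (fun τ => (hVd τ).differentiableAt)
      (fun τ => by
        rw [(hVd τ).deriv]
        have := hkey0 (w τ)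
        nlinarith)
  have hV0 : V 0 = ‖what‖^2 := by
    have : u 0 = -what := by rw [hu]; simp [h0]
    rw [hV]
    show ⟪u 0, u 0⟫ = _
    rw [this, inner_neg_neg, real_inner_self_eq_norm_sq]
  have hVbound : ∀ τ, 0 ≤ τ → V τ ≤ ‖what‖^2 := fun τ hτ => hV0 ▸ hVanti hτ
  have hwbound : ∀ τ, 0 ≤ τ → ‖w τ‖ ≤ 2 * ‖what‖ := by
    intro τ hτ
    have h1 : ‖w τ - what‖^2 ≤ ‖what‖^2 := by
      rw [← real_inner_self_eq_norm_sq]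
      exact hVbound τ hτ
    have h2 : ‖w τ - what‖ ≤ ‖what‖ := by
      nlinarith [norm_nonneg (w τ - what), norm_nonneg what]
    calc ‖w τ‖ = ‖(w τ - what) + what‖ := by rw [sub_add_cancel]
    _ ≤ ‖w τ - what‖ + ‖what‖ := norm_add_le _ _
    _ ≤ 2 * ‖what‖ := by linarith
  -- uniform bound on the inner products
  set B : ℝ := ∑ j, ‖x j‖ with hB
  have hxB : ∀ i, ‖x i‖ ≤ B :=
    fun i => Finset.single_le_sum (f := fun j => ‖x j‖)
      (fun j _ => norm_nonneg _) (Finset.mem_univ i)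
  have hB0 : (0:ℝ) ≤ B := Finset.sum_nonneg fun j _ => norm_nonneg _
  set M : ℝ := (2 * ‖what‖ + ‖wstar‖) * B with hM
  have hMw : ∀ τ, 0 ≤ τ → ∀ i, |⟪w τ, x i⟫| ≤ M := by
    intro τ hτ i
    have h1 := abs_real_inner_le_norm (w τ) (x i)
    have h2 := hwbound τ hτ
    have h3 := hxB i
    have h4 := norm_nonneg (w τ)
    have h5 := norm_nonneg (x i)
    have h6 := norm_nonneg wstar
    have h7 := norm_nonneg what
    nlinarith
  have hMs : ∀ i, |⟪wstar, x i⟫| ≤ M := by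
    intro i
    have h1 := abs_real_inner_le_norm wstar (x i)
    have h3 := hxB i
    have h5 := norm_nonneg (x i)
    have h6 := norm_nonneg wstar
    have h7 := norm_nonneg what
    nlinarith
  set c : ℝ := Real.exp (-M) / (1 + Real.exp M) ^ 2 with hc
  have hc0 : 0 < c := by positivity
  obtain ⟨c1, hc10, hanti⟩ := exists_antilip x
  have hn' : (0:ℝ) < (n:ℝ)⁻¹ := by
    have : (0:ℝ) < (n:ℝ) := by exact_mod_cast hn
    positivity
  set K : ℝ := 2 * c * (n:ℝ)⁻¹ / c1 with hK
  have hK0 : 0 < K := by positivity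
  have hGu : ∀ τ, ⟪G (w τ), u τ⟫
      = (n:ℝ)⁻¹ * ∑ i, (_root_.sigmoid ⟪w τ, x i⟫ - _root_.sigmoid ⟪wstar, x i⟫)
          * (⟪w τ, x i⟫ - ⟪wstar, x i⟫) := fun τ => hkey (w τ)
  have hui : ∀ τ i, ⟪w τ, x i⟫ - ⟪wstar, x i⟫ = ⟪x i, u τ⟫ := by
    intro τ i
    have : u τ = w τ - what := rfl
    rw [this, inner_sub_right, ← hinner i,
      real_inner_comm (w τ) (x i), real_inner_comm what (x i)]
  have hstrong : ∀ τ, 0 ≤ τ → -2 * ⟪G (w τ), u τ⟫ ≤ -K * V τ := by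
    intro τ hτ
    have hsum : (n:ℝ)⁻¹ * (c * ∑ i, ⟪x i, u τ⟫ ^ 2) ≤ ⟪G (w τ), u τ⟫ := by
      rw [hGu τ]
      apply mul_le_mul_of_nonneg_left _ (le_of_lt hn')
      rw [Finset.mul_sum]
      apply Finset.sum_le_sum
      intro i _
      calc c * ⟪x i, u τ⟫ ^ 2 = c * (⟪w τ, x i⟫ - ⟪wstar, x i⟫) ^ 2 := by rw [hui τ i]
      _ ≤ _ := sigmoid_strong (hMw τ hτ i) (hMs i)
    have huS : u τ ∈ S := Submodule.sub_mem S (hwS τ) hmem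
    have hS2 := hanti (u τ) huS
    have hVn : V τ = ‖u τ‖ ^ 2 := real_inner_self_eq_norm_sq _
    have hsum0 : 0 ≤ ∑ i, ⟪x i, u τ⟫ ^ 2 := Finset.sum_nonneg fun i _ => sq_nonneg _
    rw [hK, hVn]
    have hfinal : 2 * c * (n:ℝ)⁻¹ / c1 * ‖u τ‖ ^ 2 ≤ 2 * ⟪G (w τ), u τ⟫ := by
      calc 2 * c * (n:ℝ)⁻¹ / c1 * ‖u τ‖ ^ 2
          ≤ 2 * c * (n:ℝ)⁻¹ / c1 * (c1 * ∑ i, ⟪x i, u τ⟫ ^ 2) := by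
            apply mul_le_mul_of_nonneg_left hS2 (by positivity)
      _ = 2 * ((n:ℝ)⁻¹ * (c * ∑ i, ⟪x i, u τ⟫ ^ 2)) := by
            rw [div_mul_eq_mul_div, mul_comm c1, mul_div_assoc,
              mul_div_cancel_right₀ _ (ne_of_gt hc10)]
            ring
      _ ≤ 2 * ⟪G (w τ), u τ⟫ := by linarith
    linarith
  -- Gronwall-type argument
  set g : ℝ → ℝ := fun τ => V τ * Real.exp (K * τ) with hg
  have hgd : ∀ τ, HasDerivAt g
      ((-2 * ⟪G (w τ), u τ⟫ + K * V τ) * Real.exp (K * τ)) τ := by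
    intro τ
    have h1 : HasDerivAt (fun τ => Real.exp (K * τ)) (K * Real.exp (K * τ)) τ := by
      have h0 : HasDerivAt (fun y : ℝ => K * y) (K * 1) τ := (hasDerivAt_id τ).const_mul K
      have h1' := h0.exp
      convert h1' using 1
      ring
    have h2 := (hVd τ).fun_mul h1
    exact h2.congr_deriv (by ring)
  have hganti : AntitoneOn g (Set.Ici 0) := by
    apply antitoneOn_of_deriv_nonpos (convex_Ici 0)
    · have hdg : Differentiable ℝ g := fun τ => (hgd τ).differentiableAt
      exact hdg.continuous.continuousOn
    · intro τ _
      exact ((hgd τ).differentiableAt).differentiableWithinAt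
    · intro τ hτ
      rw [interior_Ici, Set.mem_Ioi] at hτ
      rw [(hgd τ).deriv]
      have h1 := hstrong τ (le_of_lt hτ)
      have h2 := Real.exp_pos (K * τ)
      nlinarith
  have hVexp : ∀ τ, 0 ≤ τ → V τ ≤ V 0 * Real.exp (-(K * τ)) := by
    intro τ hτ
    have h1 : g τ ≤ g 0 := hganti Set.self_mem_Ici (Set.mem_Ici.2 hτ) hτ
    have h2 : V τ * Real.exp (K * τ) ≤ V 0 := by
      have hg0 : g 0 = V 0 := by simp [hg]
      rw [← hg0]
      exact h1
    have h3 := Real.exp_pos (K * τ)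
    rw [Real.exp_neg]
    calc V τ = V τ * Real.exp (K * τ) * (Real.exp (K * τ))⁻¹ := by field_simp
    _ ≤ V 0 * (Real.exp (K * τ))⁻¹ := by
        apply mul_le_mul_of_nonneg_right h2 (by positivity)
  have hVlim : Filter.Tendsto V Filter.atTop (nhds 0) := by
    apply squeeze_zero' (Filter.eventually_atTop.2 ⟨0, fun τ _ => hVpos τ⟩)
      (Filter.eventually_atTop.2 ⟨0, fun τ hτ => hVexp τ hτ⟩)
    have h1 : Filter.Tendsto (fun τ : ℝ => K * τ) Filter.atTop Filter.atTop :=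
      Filter.Tendsto.const_mul_atTop hK0 Filter.tendsto_id
    have h2 : Filter.Tendsto (fun τ : ℝ => -(K * τ)) Filter.atTop Filter.atBot :=
      Filter.tendsto_neg_atTop_atBot.comp h1
    have h3 := Real.tendsto_exp_atBot.comp h2
    have h4 := h3.const_mul (V 0)
    simpa using h4
  have hnormeq : ∀ τ, ‖w τ - what‖ = Real.sqrt (V τ) := by
    intro τ
    have h1 : V τ = ‖u τ‖ ^ 2 := real_inner_self_eq_norm_sq _
    have h2 : u τ = w τ - what := rfl
    rw [h1, h2, Real.sqrt_sq (norm_nonneg _)]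
  have hnorm : Filter.Tendsto (fun τ => ‖w τ - what‖) Filter.atTop (nhds 0) := by
    have h2 := (Real.continuous_sqrt.tendsto 0).comp hVlim
    rw [Real.sqrt_zero] at h2
    exact h2.congr fun τ => (hnormeq τ).symm
  rw [tendsto_iff_norm_sub_tendsto_zero]
  exact hnorm


lemma span_top_of_rank_eq (x : Fin n → E d) (hd : (Xmat x).rank = d) :
    Submodule.span ℝ (Set.range x) = (⊤ : Submodule ℝ (E d)) := by
  set e := WithLp.linearEquiv 2 ℝ (Fin d → ℝ) with he
  have hcols : Set.range ((Xmat x)ᵀ) = e '' (Set.range x) := by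
    rw [← Set.range_comp]
    congr 1
  have hspan : Submodule.span ℝ (Set.range ((Xmat x)ᵀ)) = ⊤ := by
    apply Submodule.eq_top_of_finrank_eq
    have h1 : Module.finrank ℝ ↥(LinearMap.range (Xmat x).mulVecLin) = d := hd
    rw [Matrix.range_mulVecLin] at h1
    rw [Module.finrank_pi, Fintype.card_fin]
    exact h1
  have hmap : Submodule.map (e : E d →ₗ[ℝ] (Fin d → ℝ))
      (Submodule.span ℝ (Set.range x)) = ⊤ := by
    rw [Submodule.map_span, LinearEquiv.coe_coe, ← hcols, hspan]
  have hmapt : Submodule.map (e : E d →ₗ[ℝ] (Fin d → ℝ)) (⊤ : Submodule ℝ (E d)) = ⊤ := by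
    rw [Submodule.map_top, LinearMap.range_eq_top]
    exact e.surjective
  exact Submodule.map_injective_of_injective e.injective (hmap.trans hmapt.symm)

lemma isUnit_gram (x : Fin n → E d) (hr : (Xmat x).rank = n) :
    IsUnit ((Xmat x)ᵀ * Xmat x).det := by
  have h1 : ((Xmat x)ᵀ * Xmat x).rank = n := by
    rw [Matrix.rank_transpose_mul_self]
    exact hr
  have h2 : LinearMap.range ((Xmat x)ᵀ * Xmat x).mulVecLin = ⊤ := by
    apply Submodule.eq_top_of_finrank_eq
    rw [Module.finrank_pi, Fintype.card_fin]
    exact h1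
  have h3 : Function.Surjective (((Xmat x)ᵀ * Xmat x).mulVec) := by
    intro v
    have hv : v ∈ LinearMap.range ((Xmat x)ᵀ * Xmat x).mulVecLin := h2 ▸ Submodule.mem_top
    obtain ⟨a, ha⟩ := hv
    exact ⟨a, by rw [← Matrix.mulVecLin_apply]; exact ha⟩
  rw [← Matrix.isUnit_iff_isUnit_det]
  exact Matrix.mulVec_surjective_iff_isUnit.1 h3

lemma inner_E (a b : E d) : ⟪a, b⟫ = ∑ k, a k * b k := by
  rw [PiLp.inner_apply]
  exact Finset.sum_congr rfl fun k _ => by rw [RCLike.inner_apply', conj_trivial]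

lemma Xmat_transpose_apply (x : Fin n → E d) (i : Fin n) (k : Fin d) :
    (Xmat x)ᵀ i k = x i k := rfl


theorem shallow_distillation_convergence {d n : ℕ} (hn : 0 < n)
    (x : Fin n → E d) (wstar : E d) (hws : wstar ≠ 0)
    (hrank : (Xmat x).rank = min d n)
    (w : ℝ → E d)
    (hflow : ∀ τ : ℝ, HasDerivAt w (-(gradient (distillLoss x wstar) (w τ))) τ)
    (h0 : w 0 = 0) :
    Filter.Tendsto w Filter.atTop
      (nhds (if d ≤ n then wstar
        else toE ((Xmat x * ((Xmat x)ᵀ * Xmat x)⁻¹ * (Xmat x)ᵀ) *ᵥ fun k => wstar k))) := by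
  by_cases hdn : d ≤ n
  · rw [if_pos hdn]
    apply converge_master hn x wstar w hflow h0 wstar (fun i => rfl)
    rw [span_top_of_rank_eq x (by rw [hrank, min_eq_left hdn])]
    exact Submodule.mem_top
  · rw [if_neg hdn]
    push_neg at hdn
    have hr : (Xmat x).rank = n := by rw [hrank, min_eq_right (le_of_lt hdn)]
    have hU := isUnit_gram x hr
    set A := Xmat x with hA
    set P := A * (Aᵀ * A)⁻¹ * Aᵀ with hP
    have hAP : Aᵀ * P = Aᵀ := by
      have h1 : Aᵀ * P = (Aᵀ * A) * ((Aᵀ * A)⁻¹ * Aᵀ) := by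
        rw [hP]
        simp only [Matrix.mul_assoc]
      rw [h1, ← Matrix.mul_assoc, Matrix.mul_nonsing_inv _ hU, Matrix.one_mul]
    apply converge_master hn x wstar w hflow h0 (toE (P *ᵥ fun k => wstar k))
    · -- inner products agree
      intro i
      rw [inner_E, inner_E]
      have h1 : ∀ k, (toE (P *ᵥ fun k => wstar k)) k = (P *ᵥ fun k => wstar k) k :=
        fun k => rfl
      calc ∑ k, (toE (P *ᵥ fun k => wstar k)) k * x i k
          = ∑ k, (Xmat x)ᵀ i k * (P *ᵥ fun k => wstar k) k := by
            apply Finset.sum_congr rfl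
            intro k _
            rw [h1 k, Xmat_transpose_apply, mul_comm]
      _ = (Aᵀ *ᵥ (P *ᵥ fun k => wstar k)) i := by
            rw [Matrix.mulVec, dotProduct]
      _ = ((Aᵀ * P) *ᵥ fun k => wstar k) i := by rw [Matrix.mulVec_mulVec]
      _ = (Aᵀ *ᵥ fun k => wstar k) i := by rw [hAP]
      _ = ∑ k, wstar k * x i k := by
            rw [Matrix.mulVec, dotProduct]
            apply Finset.sum_congr rfl
            intro k _
            rw [Xmat_transpose_apply, mul_comm]
    · -- membership in the span
      have hb : toE (P *ᵥ fun k => wstar k)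
          = ∑ i, (((Aᵀ * A)⁻¹ * Aᵀ) *ᵥ fun k => wstar k) i • x i := by
        have hPA : P *ᵥ (fun k => wstar k)
            = A *ᵥ (((Aᵀ * A)⁻¹ * Aᵀ) *ᵥ fun k => wstar k) := by
          rw [Matrix.mulVec_mulVec]
          rw [hP, Matrix.mul_assoc]
        ext k
        show (P *ᵥ fun k => wstar k) k = _
        rw [hPA]
        have hL : (A *ᵥ (((Aᵀ * A)⁻¹ * Aᵀ) *ᵥ fun k => wstar k)) k
            = ∑ i, (((Aᵀ * A)⁻¹ * Aᵀ) *ᵥ fun k => wstar k) i * x i k := by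
          rw [Matrix.mulVec, dotProduct]
          apply Finset.sum_congr rfl
          intro i _
          rw [mul_comm]
          rfl
        rw [hL]
        have hR : (∑ i, (((Aᵀ * A)⁻¹ * Aᵀ) *ᵥ fun k => wstar k) i • x i) k
            = ∑ i, (((Aᵀ * A)⁻¹ * Aᵀ) *ᵥ fun k => wstar k) i * x i k := by
          set ev : E d →ₗ[ℝ] ℝ :=
            (LinearMap.proj k).comp (WithLp.linearEquiv 2 ℝ (Fin d → ℝ)).toLinearMap with hev
          have hev1 : ∀ v : E d, ev v = v k := fun v => rfl
          rw [← hev1 (∑ i, (((Aᵀ * A)⁻¹ * Aᵀ) *ᵥ fun k => wstar k) i • x i), map_sum]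
          apply Finset.sum_congr rfl
          intro i _
          rw [_root_.map_smul, hev1, smul_eq_mul]
        rw [hR]
      rw [hb]
      exact Submodule.sum_mem _ fun i _ =>
        Submodule.smul_mem _ _ (Submodule.subset_span ⟨i, rfl⟩)

end Master

end
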